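/- For every bipartite graph G, a(G) ≤ 2 + 2α(G) - 2√(1 + α(G)). -/

import Mathlib

/-!
Let `A` be a set of `a(G)` vertices whose degree sum is at most `m(G)`, and `B` its complement,
of size `k`. Counting edge ends, `A` spans at most as many edges as `B`, and `B` spans at most
`k² / 4` edges because `G` is bipartite. Deleting one endpoint of each edge inside `A` leaves an
independent set, so `a ≤ α + k² / 4`; the two colour classes give `a + k = n ≤ 2α`. Minimising
`max (2α - k) (α + k² / 4)` over `k` yields the bound.
-/

open Finset

namespace AnnPaper

variable {V : Type*}

/-- A finset of vertices is independent: no two of its members are adjacent. -/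
def IsIndepFinset (G : SimpleGraph V) (s : Finset V) : Prop :=
  ∀ a ∈ s, ∀ b ∈ s, ¬ G.Adj a b

/-- The independence number `α(G)`. -/
noncomputable def indepNum (G : SimpleGraph V) : ℕ :=
  sSup {k | ∃ s : Finset V, IsIndepFinset G s ∧ s.card = k}

/-- A finset of edges is a matching: edges of `G`, pairwise vertex-disjoint. -/
def IsMatchingFinset (G : SimpleGraph V) (s : Finset (Sym2 V)) : Prop :=
  (↑s ⊆ G.edgeSet) ∧ ∀ e ∈ s, ∀ f ∈ s, e ≠ f → ∀ v : V, v ∈ e → v ∉ f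

/-- The matching number `μ(G)`. -/
noncomputable def matchNum (G : SimpleGraph V) : ℕ :=
  sSup {k | ∃ s : Finset (Sym2 V), IsMatchingFinset G s ∧ s.card = k}

/-- The number of edges `m(G)`. -/
noncomputable def edgeCount (G : SimpleGraph V) : ℕ := G.edgeSet.ncard

/-- The degree of a vertex. -/
noncomputable def deg (G : SimpleGraph V) (v : V) : ℕ := (G.neighborSet v).ncard

/-- The annihilation number `a(G)`: the largest `k` such that the sum of the `k`
smallest degrees is at most `m(G)`; equivalently, the largest cardinality of a
set of vertices whose degree sum is at most `m(G)`. -/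
noncomputable def annNum (G : SimpleGraph V) : ℕ :=
  sSup {k | ∃ A : Finset V, A.card = k ∧ ∑ v ∈ A, deg G v ≤ edgeCount G}

/-- The number of edges of the subgraph induced on a set of vertices. -/
noncomputable def inducedEdgeCount (G : SimpleGraph V) (A : Set V) : ℕ :=
  (SimpleGraph.induce A G).edgeSet.ncard

section Counting

variable [Fintype V] (G : SimpleGraph V) [DecidableRel G.Adj]

lemma deg_eq_degree (v : V) : deg G v = G.degree v := by
  rw [deg, ← SimpleGraph.card_neighborFinset_eq_degree, Set.ncard_eq_toFinset_card']
  congr 1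

lemma edgeCount_eq_card_edgeFinset : edgeCount G = #G.edgeFinset := by
  rw [edgeCount, Set.ncard_eq_toFinset_card']
  congr 1

variable [DecidableEq V]

def edgesWithin (A : Finset V) : Finset (Sym2 V) := {e ∈ G.edgeFinset | e ∈ A.sym2}

lemma sum_deg_eq_sum_card_filter_mem (A : Finset V) :
    ∑ v ∈ A, deg G v = ∑ e ∈ G.edgeFinset, #{v ∈ A | v ∈ e} := by
  simp_rw [deg_eq_degree, ← SimpleGraph.card_incidenceFinset_eq_degree,
    SimpleGraph.incidenceFinset_eq_filter, card_filter]
  exact sum_comm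

/-- An edge meeting `A` contributes at least one to `∑ v ∈ A, deg G v`, and an edge inside `A`
contributes two. -/
lemma ite_add_one_le_card_filter_mem_add_ite (A : Finset V) {e : Sym2 V}
    (he : e ∈ G.edgeFinset) :
    (if e ∈ A.sym2 then 1 else 0) + 1 ≤ #{v ∈ A | v ∈ e} + (if e ∈ Aᶜ.sym2 then 1 else 0) := by
  induction e with
  | _ x y =>
    have hxy : x ≠ y := G.ne_of_adj (SimpleGraph.mem_edgeFinset.mp he)
    have hfilter : ({v ∈ A | v ∈ s(x, y)} : Finset V) = {v ∈ ({x, y} : Finset V) | v ∈ A} := by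
      ext v
      simp [and_comm]
    rw [hfilter, filter_insert, filter_singleton]
    simp only [mk_mem_sym2_iff, mem_compl]
    by_cases hx : x ∈ A <;> by_cases hy : y ∈ A <;> simp [hx, hy, hxy]

lemma card_edgesWithin_le_compl_of_sum_deg_le (A : Finset V)
    (hA : ∑ v ∈ A, deg G v ≤ edgeCount G) :
    #(edgesWithin G A) ≤ #(edgesWithin G Aᶜ) := by
  have hsum := sum_le_sum fun e (he : e ∈ G.edgeFinset) =>
    ite_add_one_le_card_filter_mem_add_ite G A he
  simp only [sum_add_distrib, ← card_filter, sum_const, smul_eq_mul,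
    mul_one, ← sum_deg_eq_sum_card_filter_mem] at hsum
  rw [edgeCount_eq_card_edgeFinset] at hA
  unfold edgesWithin
  omega

end Counting

lemma card_le_indepNum [Fintype V] (G : SimpleGraph V) {s : Finset V} (hs : IsIndepFinset G s) :
    #s ≤ indepNum G :=
  le_csSup ⟨Fintype.card V, by rintro k ⟨t, -, rfl⟩; exact card_le_univ t⟩ ⟨s, hs, rfl⟩

lemma exists_card_eq_annNum [Fintype V] (G : SimpleGraph V) :
    ∃ A : Finset V, #A = annNum G ∧ ∑ v ∈ A, deg G v ≤ edgeCount G :=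
  Nat.sSup_mem (s := {k | ∃ A : Finset V, #A = k ∧ ∑ v ∈ A, deg G v ≤ edgeCount G})
    ⟨0, ∅, by simp⟩ ⟨Fintype.card V, by rintro k ⟨t, rfl, -⟩; exact card_le_univ t⟩

lemma card_le_indepNum_add_card_edgesWithin [Fintype V] [DecidableEq V] (G : SimpleGraph V)
    [DecidableRel G.Adj] (A : Finset V) : #A ≤ indepNum G + #(edgesWithin G A) := by
  set T := (edgesWithin G A).image fun e => e.out.1
  have hindep : IsIndepFinset G (A \ T) := by
    intro x hx y hy hxy
    rw [mem_sdiff] at hx hy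
    have hmem : s(x, y) ∈ edgesWithin G A := by
      simp [edgesWithin, hxy, hx.1, hy.1]
    have hout : (s(x, y)).out.1 ∈ T := mem_image_of_mem _ hmem
    rcases Sym2.mem_iff.mp (Sym2.out_fst_mem s(x, y)) with h | h
    · exact hx.2 (h ▸ hout)
    · exact hy.2 (h ▸ hout)
  calc #A ≤ #(A \ T) + #T := card_le_card_sdiff_add_card
    _ ≤ indepNum G + #(edgesWithin G A) :=
      Nat.add_le_add (card_le_indepNum G hindep) card_image_le

section Coloring

variable {G : SimpleGraph V} {α : Type*}

lemma isIndepFinset_filter_coloring_eq [DecidableEq α] (C : G.Coloring α) (s : Finset V)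
    (c : α) :
    IsIndepFinset G {v ∈ s | C v = c} := by
  intro x hx y hy hxy
  exact C.valid hxy ((mem_filter.mp hx).2.trans (mem_filter.mp hy).2.symm)

lemma card_le_card_mul_indepNum [Fintype V] [Fintype α] [DecidableEq α] (C : G.Coloring α) :
    Fintype.card V ≤ Fintype.card α * indepNum G :=
  calc Fintype.card V = ∑ c : α, #{v | C v = c} :=
        card_eq_sum_card_fiberwise fun _ _ => mem_univ _
    _ ≤ ∑ _c : α, indepNum G :=
        sum_le_sum fun c _ => card_le_indepNum G (isIndepFinset_filter_coloring_eq C _ c)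
    _ = Fintype.card α * indepNum G := by simp

lemma four_mul_card_edgesWithin_le_sq [Fintype V] [DecidableEq V] [DecidableRel G.Adj]
    (C : G.Coloring (Fin 2)) (B : Finset V) :
    4 * #(edgesWithin G B) ≤ #B ^ 2 := by
  set P : Finset V := {v ∈ B | C v = 0}
  set Q : Finset V := {v ∈ B | C v ≠ 0}
  have hPQ : #P + #Q = #B := card_filter_add_card_filter_not _
  have hsub : edgesWithin G B ⊆ (P ×ˢ Q).image (Function.uncurry Sym2.mk) := by
    intro e he
    induction e with
    | _ x y =>
      simp only [edgesWithin, mem_filter, SimpleGraph.mem_edgeFinset,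
        SimpleGraph.mem_edgeSet, mk_mem_sym2_iff] at he
      obtain ⟨hxy, hx, hy⟩ := he
      have hC : C x ≠ C y := C.valid hxy
      have : ∀ a b : Fin 2, a ≠ b → a = 0 ∨ b = 0 := by decide
      simp only [mem_image, mem_product, Prod.exists]
      rcases this _ _ hC with h | h
      · exact ⟨x, y, ⟨by simp [P, hx, h], by simp [Q, hy, ← h, hC.symm]⟩, rfl⟩
      · exact ⟨y, x, ⟨by simp [P, hy, h], by simp [Q, hx, ← h, hC]⟩, Sym2.eq_swap⟩
  have hcard : #(edgesWithin G B) ≤ #P * #Q :=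
    (card_le_card hsub).trans (card_image_le.trans (card_product _ _).le)
  rw [← hPQ]
  nlinarith [sq_nonneg ((#P : ℤ) - #Q)]

end Coloring

/-- With `s = √(1 + α)`: if `k ≥ 2s - 2` the first bound gives the claim, otherwise
`k² / 4 < (s - 1)² = α + 2 - 2s` and the second one does. -/
lemma le_two_add_two_mul_sub_two_mul_sqrt {a α k : ℕ} (hn : a + k ≤ 2 * α)
    (hm : 4 * a ≤ 4 * α + k ^ 2) :
    (a : ℝ) ≤ 2 + 2 * α - 2 * √(1 + α) := by
  have hn' : (a : ℝ) + k ≤ 2 * α := by exact_mod_cast hn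
  have hm' : 4 * (a : ℝ) ≤ 4 * α + k ^ 2 := by exact_mod_cast hm
  have hs : √(1 + α) ^ 2 = 1 + α := Real.sq_sqrt (by positivity)
  have hs1 : 1 ≤ √(1 + α) := Real.one_le_sqrt.mpr (by simp)
  rcases le_or_gt (2 * √(1 + α) - 2) k with hk | hk
  · linarith
  · nlinarith [Nat.cast_nonneg (α := ℝ) k]

theorem stmt16 {V : Type*} [Fintype V] (G : SimpleGraph V) (hbip : G.Colorable 2) :
    (annNum G : ℝ) ≤ 2 + 2 * (indepNum G : ℝ) - 2 * Real.sqrt (1 + (indepNum G : ℝ)) := by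
  classical
  obtain ⟨C⟩ := hbip
  obtain ⟨A, hA, hsum⟩ := exists_card_eq_annNum G
  apply le_two_add_two_mul_sub_two_mul_sqrt (k := #Aᶜ)
  · simpa [← hA, card_add_card_compl] using card_le_card_mul_indepNum C
  · have h₁ := card_le_indepNum_add_card_edgesWithin G A
    have h₂ := card_edgesWithin_le_compl_of_sum_deg_le G A hsum
    have h₃ := four_mul_card_edgesWithin_le_sq C Aᶜ
    omega

end AnnPaper
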